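/- arXiv:1807.04735 — 2 statements merged into one kernel-verified Lean document; each statement's English description precedes it below -/
import Mathlib

section
/- Let (x_i)_{i≥1} be a 0-1 sequence and p = ∑_{i≥1} (x_i·2^(-(3i-2)) + 2^(-3i)). For every k ≥ 1 and every real t with |t - p·2^(6k)| ≤ 2^(3k), we have ⌊t / 2^(3k+2)⌋ mod 2 = x_k. -/
/-!
In base 8 the digits of `p` are `4 x (i + 1) + 1 ∈ {1, 5}`. Multiplying by `8 ^ k` splits `p` into
the integer formed by its first `k` digits and a remainder `ε ∈ [0, 5 / 7]`, so
`p * 2 ^ (6 * k) = 8 ^ k * (8 * N + 4 x k + 1 + ε)` with `N` an integer. Bit `3 k + 2` of this number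
is `x k`, and the digit `1` together with `ε ≤ 5 / 7` leaves room for a perturbation of size `8 ^ k`
on both sides.
-/

open Finset

def digitsPrefix (b : ℕ) (d : ℕ → ℕ) : ℕ → ℕ
  | 0 => 0
  | n + 1 => b * digitsPrefix b d n + d n

section Digits

variable {b : ℕ} {d : ℕ → ℕ} {D : ℕ}

lemma summable_digits (hb : 1 < b) (hd : ∀ i, d i ≤ D) :
    Summable fun i => (d i : ℝ) / (b : ℝ) ^ (i + 1) := by
  have hb' : (1 : ℝ) < b := by exact_mod_cast hb
  refine Summable.of_nonneg_of_le (fun i => by positivity) (fun i => ?_)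
    ((summable_geometric_of_lt_one (by positivity) ((inv_lt_one₀ (by positivity)).2 hb')).mul_left
      ((D : ℝ) / b))
  rw [inv_pow, pow_succ', ← div_div, div_eq_mul_inv _ ((b : ℝ) ^ i)]
  gcongr
  exact_mod_cast hd i

lemma tsum_digits_le (hb : 1 < b) (hd : ∀ i, d i ≤ D) :
    ∑' i, (d i : ℝ) / (b : ℝ) ^ (i + 1) ≤ D / ((b : ℝ) - 1) := by
  have hb' : (1 : ℝ) < b := by exact_mod_cast hb
  have hgeom : ∑' i : ℕ, (D : ℝ) / (b : ℝ) ^ (i + 1) = D / ((b : ℝ) - 1) := by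
    simp_rw [pow_succ', ← div_div, div_eq_mul_inv _ ((b : ℝ) ^ _), ← inv_pow]
    rw [tsum_mul_left, tsum_geometric_of_lt_one (by positivity) ((inv_lt_one₀ (by positivity)).2 hb')]
    field_simp
  rw [← hgeom]
  refine (summable_digits hb hd).tsum_le_tsum (fun i => ?_) (summable_digits hb fun _ => le_rfl)
  gcongr
  exact_mod_cast hd i

lemma sum_range_digits_mul_pow (hb : b ≠ 0) (n : ℕ) :
    (∑ i ∈ range n, (d i : ℝ) / (b : ℝ) ^ (i + 1)) * (b : ℝ) ^ n = digitsPrefix b d n := by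
  induction n with
  | zero => simp [digitsPrefix]
  | succ n ih =>
    have hb' : (b : ℝ) ≠ 0 := by exact_mod_cast hb
    rw [sum_range_succ, add_mul, pow_succ, ← mul_assoc, ih, digitsPrefix]
    field_simp
    push_cast
    ring

lemma tsum_digits_mul_pow_sub_mem_Icc (hb : 1 < b) (hd : ∀ i, d i ≤ D) (n : ℕ) :
    (∑' i, (d i : ℝ) / (b : ℝ) ^ (i + 1)) * (b : ℝ) ^ n - digitsPrefix b d n
      ∈ Set.Icc 0 (D / ((b : ℝ) - 1)) := by
  have htail : (∑' i, (d (i + n) : ℝ) / (b : ℝ) ^ (i + n + 1)) * (b : ℝ) ^ n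
      = ∑' i, (d (i + n) : ℝ) / (b : ℝ) ^ (i + 1) := by
    rw [← tsum_mul_right]
    congr 1 with i
    rw [add_right_comm, pow_add]
    field_simp
  rw [← (summable_digits hb hd).sum_add_tsum_nat_add n, add_mul, sum_range_digits_mul_pow (by omega),
    add_sub_cancel_left, htail]
  exact ⟨tsum_nonneg fun i => by positivity, tsum_digits_le hb fun i => hd (i + n)⟩

end Digits

lemma Int.floor_div_emod_two_eq {c t : ℝ} (hc : 0 < c) (m : ℤ) {a : ℕ} (ha : a ≤ 1)
    (h : t - c * (2 * m + a) ∈ Set.Ico 0 c) : ⌊t / c⌋ % 2 = a := by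
  have hfloor : ⌊t / c⌋ = 2 * m + a := by
    rw [Int.floor_eq_iff, le_div_iff₀ hc, div_lt_iff₀ hc]
    push_cast
    constructor <;> linarith [h.1, h.2]
  omega

lemma zpow_add_zpow_eq_div_eight_pow (y : ℝ) (i : ℕ) :
    y * (2 : ℝ) ^ (-(3 * (i : ℤ) + 1)) + 2 ^ (-(3 * (i : ℤ) + 3)) = (4 * y + 1) / 8 ^ (i + 1) := by
  have h1 : -(3 * (i : ℤ) + 1) = -((3 * i + 1 : ℕ) : ℤ) := by push_cast; ring
  have h3 : -(3 * (i : ℤ) + 3) = -((3 * i + 3 : ℕ) : ℤ) := by push_cast; ring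
  rw [h1, h3, zpow_neg, zpow_neg, zpow_natCast, zpow_natCast, show (8 : ℝ) = 2 ^ 3 by norm_num,
    ← pow_mul]
  field_simp
  ring

theorem stmt_9 (x : ℕ → ℕ) (hx : ∀ i, x i ≤ 1) (p : ℝ)
    (hp : p = ∑' i : ℕ, ((x (i + 1) : ℝ) * 2 ^ (-(3 * (i : ℤ) + 1))
      + 2 ^ (-(3 * (i : ℤ) + 3))))
    (k : ℕ) (hk : 1 ≤ k) (t : ℝ)
    (ht : |t - p * 2 ^ (6 * k)| ≤ 2 ^ (3 * k)) :
    ⌊t / 2 ^ (3 * k + 2)⌋ % 2 = x k := by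
  set d : ℕ → ℕ := fun i => 4 * x (i + 1) + 1
  have hp8 : p = ∑' i, (d i : ℝ) / ((8 : ℕ) : ℝ) ^ (i + 1) := by
    simp only [hp, zpow_add_zpow_eq_div_eight_pow, d]
    push_cast
    norm_num
  obtain ⟨hrem0, hrem1⟩ := tsum_digits_mul_pow_sub_mem_Icc (b := 8) (d := d) (D := 5) (by norm_num)
    (fun i => by have := hx (i + 1); simp only [d]; omega) k
  obtain ⟨m, rfl⟩ : ∃ m, k = m + 1 := ⟨k - 1, by omega⟩
  simp only [← hp8, digitsPrefix, d] at hrem0 hrem1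
  push_cast at hrem0 hrem1
  have h64 : (2 : ℝ) ^ (6 * (m + 1)) = 8 ^ (m + 1) * 8 ^ (m + 1) := by
    rw [← mul_pow]; norm_num [pow_mul]
  have h4 : (2 : ℝ) ^ (3 * (m + 1) + 2) = 4 * 8 ^ (m + 1) := by
    rw [pow_add, pow_mul]; norm_num; ring
  have h8 : (2 : ℝ) ^ (3 * (m + 1)) = 8 ^ (m + 1) := by rw [pow_mul]; norm_num
  rw [h64, h8, abs_le] at ht
  refine Int.floor_div_emod_two_eq (by positivity) (digitsPrefix 8 d m) (hx _) ?_
  rw [h4]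
  push_cast
  have hq : (0 : ℝ) < 8 ^ (m + 1) := by positivity
  -- the remainder is `8 ^ k * (1 + ε) + δ` with `0 ≤ ε ≤ 5 / 7` and `|δ| ≤ 8 ^ k`
  constructor <;> nlinarith
end

section
/- Let (x_i)_{i≥1} be a 0-1 sequence, p = ∑_{i≥1} (x_i·2^(-(3i-2)) + 2^(-3i)), and let k ≥ 1. If H is a binomial random variable with 64^k trials and success probability p, then Pr[ ⌊H / 2^(3k+2)⌋ mod 2 = x_k ] ≥ 3/4. -/
open MeasureTheory
open scoped NNReal ENNReal

/-!
In base 8, `p = 0.d₁d₂d₃…` with digits `dᵢ = 4xᵢ + 1 ∈ {1, 5}`, so `8^k p = N + t` with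
`N ≡ 4x_k + 1 (mod 8)` and a tail `t ∈ [0, 5/7]`. Hence `64^k p = 2^(3k+2) q + 8^k (1 + t)` with
`q ≡ x_k (mod 2)`, and every integer within `8^k` of `64^k p` has quotient `q` by `2^(3k+2) = 4·8^k`.
By Chebyshev's inequality, with variance `64^k p (1 - p) ≤ 64^k / 4`, the binomial `H` lies that
close to its mean with probability at least `3/4`.
-/

set_option linter.deprecated false

namespace PMF

lemma binomial_apply_toReal (p : ℝ≥0) (hp : p ≤ 1) (n : ℕ) (i : Fin (n + 1)) :
    (binomial p hp n i).toReal = n.choose i * (p : ℝ) ^ (i : ℕ) * (1 - p) ^ (n - i) := by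
  rw [binomial_apply]
  simp only [Fin.val_last, ENNReal.toReal_mul, ENNReal.toReal_pow, ENNReal.coe_toReal,
    ENNReal.toReal_sub_of_le (ENNReal.coe_le_one_iff.mpr hp) ENNReal.one_ne_top, ENNReal.toReal_one,
    ENNReal.toReal_natCast]
  ring

lemma integral_sq_sub_binomial (p : ℝ≥0) (hp : p ≤ 1) (n : ℕ) :
    ∫ i, (((i : ℕ) : ℝ) - n * p) ^ 2 ∂(binomial p hp n).toMeasure = n * p * (1 - p) := by
  have h := congrArg (Polynomial.eval (p : ℝ)) (bernsteinPolynomial.variance ℝ n)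
  simp only [Polynomial.eval_finset_sum, Polynomial.eval_mul, Polynomial.eval_pow,
    Polynomial.eval_sub, Polynomial.eval_X, Polynomial.eval_natCast,
    Polynomial.eval_one, bernsteinPolynomial, nsmul_eq_mul] at h
  rw [integral_eq_sum, ← h, ← Fin.sum_univ_eq_sum_range]
  refine Finset.sum_congr rfl fun i _ => ?_
  rw [binomial_apply_toReal, smul_eq_mul]
  ring

lemma measureReal_binomial_le_abs_sub (p : ℝ≥0) (hp : p ≤ 1) (n : ℕ) {δ : ℝ} (hδ : 0 < δ) :
    (binomial p hp n).toMeasure.real {i | δ ≤ |((i : ℕ) : ℝ) - n * p|}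
      ≤ n * p * (1 - p) / δ ^ 2 := by
  have hsq : {i : Fin (n + 1) | δ ≤ |((i : ℕ) : ℝ) - n * p|}
      = {i : Fin (n + 1) | δ ^ 2 ≤ (((i : ℕ) : ℝ) - n * p) ^ 2} := by
    ext i
    simp only [Set.mem_ofPred_eq, sq_le_sq, abs_of_pos hδ]
  rw [hsq, le_div_iff₀ (by positivity), mul_comm, ← integral_sq_sub_binomial p hp n]
  exact mul_meas_ge_le_integral_of_nonneg (ae_of_all _ fun _ => sq_nonneg _) (.of_finite) _

lemma one_sub_div_sq_le_measureReal_binomial (p : ℝ≥0) (hp : p ≤ 1) (n : ℕ) {δ : ℝ} (hδ : 0 < δ)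
    {S : Set (Fin (n + 1))} (hS : ∀ i : Fin (n + 1), |((i : ℕ) : ℝ) - n * p| < δ → i ∈ S) :
    1 - n * p * (1 - p) / δ ^ 2 ≤ (binomial p hp n).toMeasure.real S := by
  have hSc : Sᶜ ⊆ {i : Fin (n + 1) | δ ≤ |((i : ℕ) : ℝ) - n * p|} :=
    fun i hi => not_lt.mp fun h => hi (hS i h)
  have h := (measureReal_mono hSc).trans (measureReal_binomial_le_abs_sub p hp n hδ)
  rw [probReal_compl_eq_one_sub .of_discrete] at h
  linarith

end PMF

lemma hasSum_div_pow_succ {b : ℝ} (hb : 1 < b) (c : ℝ) :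
    HasSum (fun i : ℕ => c / b ^ (i + 1)) (c / (b - 1)) := by
  have hb0 : 0 < b := by linarith
  have hb1 : b - 1 ≠ 0 := by linarith
  have hterm : (fun i : ℕ => c / b ^ (i + 1)) = fun i => c / b * b⁻¹ ^ i := by
    ext i; rw [pow_succ, inv_pow]; field_simp
  have hsum : c / (b - 1) = c / b * (1 - b⁻¹)⁻¹ := by field_simp
  rw [hterm, hsum]
  exact (hasSum_geometric_of_lt_one (inv_nonneg.mpr hb0.le) (inv_lt_one_of_one_lt₀ hb)).mul_left _

section Digits

variable {b : ℕ} {d : ℕ → ℕ}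

noncomputable def digitTail (b : ℕ) (d : ℕ → ℕ) (j : ℕ) : ℝ :=
  ∑' i, (d (i + j) : ℝ) / (b : ℝ) ^ (i + 1)

def digitPrefix (b : ℕ) (d : ℕ → ℕ) : ℕ → ℕ
  | 0 => 0
  | k + 1 => b * digitPrefix b d k + d k

lemma summable_digit_div_pow {c : ℕ} (hb : 1 < b) (hd : ∀ i, d i ≤ c) (j : ℕ) :
    Summable fun i => (d (i + j) : ℝ) / (b : ℝ) ^ (i + 1) :=
  (hasSum_div_pow_succ (Nat.one_lt_cast.mpr hb) c).summable.of_nonneg_of_le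
    (fun _ => by positivity) fun i => by gcongr; exact_mod_cast hd _

lemma digitTail_le {c : ℕ} (hb : 1 < b) (hd : ∀ i, d i ≤ c) (j : ℕ) :
    digitTail b d j ≤ c / (b - 1) :=
  hasSum_le (fun i => by gcongr; exact_mod_cast hd _)
    (summable_digit_div_pow hb hd j).hasSum (hasSum_div_pow_succ (Nat.one_lt_cast.mpr hb) c)

lemma mul_digitTail {c : ℕ} (hb : 1 < b) (hd : ∀ i, d i ≤ c) (j : ℕ) :
    b * digitTail b d j = d j + digitTail b d (j + 1) := by
  have hb0 : (b : ℝ) ≠ 0 := by positivity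
  rw [digitTail, (summable_digit_div_pow hb hd j).tsum_eq_zero_add, mul_add, ← tsum_mul_left]
  congr 1
  · rw [zero_add, zero_add, pow_one, mul_div_cancel₀ _ hb0]
  · refine tsum_congr fun i => ?_
    rw [add_right_comm, add_assoc, pow_succ']
    field_simp

lemma pow_mul_digitTail_zero {c : ℕ} (hb : 1 < b) (hd : ∀ i, d i ≤ c) (k : ℕ) :
    (b : ℝ) ^ k * digitTail b d 0 = digitPrefix b d k + digitTail b d k := by
  induction k with
  | zero => simp [digitPrefix]
  | succ k ih =>
    rw [pow_succ', mul_assoc, ih, mul_add, mul_digitTail hb hd, digitPrefix]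
    push_cast
    ring

end Digits

lemma tsum_eq_digitTail (x : ℕ → ℕ) :
    ∑' i : ℕ, ((x (i + 1) : ℝ) * 2 ^ (-(3 * (i : ℤ) + 1)) + 2 ^ (-(3 * (i : ℤ) + 3)))
      = digitTail 8 (fun i => 4 * x (i + 1) + 1) 0 := by
  refine tsum_congr fun i => ?_
  have h1 : (2 : ℝ) ^ (-(3 * (i : ℤ) + 1)) = 4 / 8 ^ (i + 1) := by
    rw [zpow_neg, show 3 * (i : ℤ) + 1 = ((3 * i + 1 : ℕ) : ℤ) by push_cast; ring, zpow_natCast,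
      show (8 : ℝ) = 2 ^ 3 by norm_num, ← pow_mul]
    field_simp
    ring
  have h3 : (2 : ℝ) ^ (-(3 * (i : ℤ) + 3)) = 1 / 8 ^ (i + 1) := by
    rw [zpow_neg, show 3 * (i : ℤ) + 3 = ((3 * (i + 1) : ℕ) : ℤ) by push_cast; ring, zpow_natCast,
      pow_mul]
    norm_num
  rw [h1, h3]
  push_cast
  ring

lemma Nat.div_eq_of_abs_sub_lt {h m q : ℕ} {c e : ℝ} (hh : |(h : ℝ) - (m * q + c)| < e)
    (hec : e ≤ c) (hcm : c + e ≤ m) : h / m = q := by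
  rw [abs_lt] at hh
  refine Nat.div_eq_of_lt_le ?_ ?_
  · exact_mod_cast (show ((q * m : ℕ) : ℝ) ≤ h by push_cast; linarith)
  · exact_mod_cast (show (h : ℝ) < ((q + 1) * m : ℕ) by push_cast; linarith)

lemma div_two_pow_mod_two_eq_of_abs_sub_lt {x : ℕ → ℕ} (hx : ∀ i, x i ≤ 1) {k : ℕ} (hk : 1 ≤ k)
    {h : ℕ} (hh : |(h : ℝ) - 64 ^ k * digitTail 8 (fun i => 4 * x (i + 1) + 1) 0| < 8 ^ k) :
    h / 2 ^ (3 * k + 2) % 2 = x k := by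
  obtain ⟨j, rfl⟩ : ∃ j, k = j + 1 := ⟨k - 1, by omega⟩
  set d : ℕ → ℕ := fun i => 4 * x (i + 1) + 1
  have hd : ∀ i, d i ≤ 5 := fun i => by have := hx (i + 1); dsimp only [d]; omega
  set t := digitTail 8 d (j + 1)
  have ht_nonneg : 0 ≤ t := tsum_nonneg fun _ => by positivity
  have ht_le : t ≤ 5 / 7 := by
    have := digitTail_le (by norm_num : 1 < 8) hd (j + 1); norm_num at this; linarith
  have h2 : ((2 ^ (3 * (j + 1) + 2) : ℕ) : ℝ) = 4 * 8 ^ (j + 1) := by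
    push_cast; rw [pow_add, pow_mul]; norm_num; ring
  set q := 2 * digitPrefix 8 d j + x (j + 1)
  have hsplit : (64 : ℝ) ^ (j + 1) * digitTail 8 d 0
      = ((2 ^ (3 * (j + 1) + 2) : ℕ) : ℝ) * q + 8 ^ (j + 1) * (1 + t) := by
    have h8 := pow_mul_digitTail_zero (by norm_num : 1 < 8) hd (j + 1)
    simp only [digitPrefix, Nat.cast_ofNat] at h8
    rw [show (64 : ℝ) ^ (j + 1) = 8 ^ (j + 1) * 8 ^ (j + 1) by rw [← mul_pow]; norm_num,
      mul_assoc, h8, h2]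
    simp only [q, d]
    push_cast
    ring
  rw [hsplit] at hh
  have h8_pos : (0 : ℝ) < 8 ^ (j + 1) := by positivity
  rw [Nat.div_eq_of_abs_sub_lt hh (by nlinarith) (by rw [h2]; nlinarith)]
  have := hx (j + 1)
  omega

/-- If `H` is binomial with `64^k` trials and success probability
`p = 0.x₁01x₂01x₃01⋯` (in binary), then the `(3k+3)`-th binary digit of `H`,
i.e. `⌊H/2^(3k+2)⌋ mod 2`, equals `x_k` with probability at least `3/4`. -/
theorem stmt_10 (x : ℕ → ℕ) (hx : ∀ i, x i ≤ 1) (p : ℝ)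
    (hp : p = ∑' i : ℕ, ((x (i + 1) : ℝ) * 2 ^ (-(3 * (i : ℤ) + 1))
      + 2 ^ (-(3 * (i : ℤ) + 3))))
    (hp1 : ENNReal.ofReal p ≤ 1) (k : ℕ) (hk : 1 ≤ k) :
    3 / 4 ≤ (PMF.binomial (Real.toNNReal p) (ENNReal.coe_le_one_iff.mp hp1) (64 ^ k)).toMeasure
      {h : Fin (64 ^ k + 1) | (h : ℕ) / 2 ^ (3 * k + 2) % 2 = x k} := by
  have hp0 : 0 ≤ p := hp ▸ tsum_nonneg fun _ => by positivity
  have hp_coe : ((Real.toNNReal p : ℝ≥0) : ℝ) = p := Real.coe_toNNReal p hp0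
  have hS := PMF.one_sub_div_sq_le_measureReal_binomial _ (ENNReal.coe_le_one_iff.mp hp1) (64 ^ k)
    (δ := 8 ^ k) (by positivity)
    (S := {h : Fin (64 ^ k + 1) | (h : ℕ) / 2 ^ (3 * k + 2) % 2 = x k}) fun i hi => by
      rw [hp_coe, Nat.cast_pow, Nat.cast_ofNat, hp, tsum_eq_digitTail] at hi
      exact div_two_pow_mod_two_eq_of_abs_sub_lt hx hk hi
  have hvar : (64 : ℝ) ^ k * p * (1 - p) / ((8 : ℝ) ^ k) ^ 2 ≤ 1 / 4 := by
    rw [← pow_mul, mul_comm k, pow_mul, show (8 : ℝ) ^ 2 = 64 by norm_num, mul_assoc,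
      mul_div_cancel_left₀ _ (pow_ne_zero _ (by norm_num))]
    nlinarith [sq_nonneg (p - 1 / 2)]
  rw [hp_coe, Nat.cast_pow, Nat.cast_ofNat] at hS
  calc (3 / 4 : ℝ≥0∞) = ENNReal.ofReal (3 / 4) := by
        rw [ENNReal.ofReal_div_of_pos (by norm_num)]; norm_num
    _ ≤ _ := ENNReal.ofReal_le_of_le_toReal (by rw [← measureReal_def]; linarith)
end
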